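/- arXiv:1408.4866 — 4 statements merged into one kernel-verified Lean document; each statement's English description precedes it below -/
import Mathlib

section
/- For r ≥ 2, the product over all r-class regular partitions ρ of n of Π_i m_i(ρ)! equals r^{c_{r,n}} times the product over all r-class regular partitions ρ of n of the product of the parts of ρ, where c_{r,n} = Σ_{j: r∤j} Σ_{k ≥ 1} k · W_{r, r^k j, n}. -/
open Nat Finset
open scoped Classical

/-- The set of `r`-class regular partitions of `n`: no part divisible by `r`. -/
noncomputable def CP (r n : ℕ) : Finset (n.Partition) :=
  Finset.univ.filter (fun l => ∀ p ∈ l.parts, ¬ r ∣ p)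

/-- The number of part-sizes `i` whose multiplicity in `ρ` is at least `j` (for `j ≥ 1`). -/
noncomputable def numGE {n : ℕ} (ρ : n.Partition) (j : ℕ) : ℕ :=
  (ρ.parts.toFinset.filter (fun i => j ≤ ρ.parts.count i)).card

/-- `W r j n = Σ_{ρ ∈ CP_{r,n}} #{i : m_i(ρ) ≥ j}`. -/
noncomputable def W (r j n : ℕ) : ℕ := ∑ ρ ∈ CP r n, numGE ρ j

/-- `c_{r,n} = Σ_{j ≥ 1, r ∤ j} Σ_{k ≥ 1} k · W_{r, r^k j, n}` (the `k = 0` summand vanishes). -/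
noncomputable def cExp (r n : ℕ) : ℕ :=
  ∑' j : ℕ, ∑' k : ℕ, if ¬ r ∣ j then k * W r (r ^ k * j) n else 0

/-!
Write `m_i!` as the product of the thresholds `j ≤ m_i`: the left side becomes
`∏_j j ^ W_{r,j,n}`. Writing each `j = r^k j'` with `r ∤ j'` splits off `r ^ c_{r,n}` and leaves
`∏_{j'} j' ^ (Σ_k W_{r,r^k j',n})`. Trading `s` copies of a part `a` for `t` copies of a part `b`
when `s a = t b` shows that as many `ρ ∈ CP_{r,n}` have `m_i(ρ) ≥ r^k j'` as have
`m_{j'}(ρ) ≥ r^k i`. Summing over `i` and `k` turns `Σ_k W_{r,r^k j',n}` into the total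
multiplicity of `j'` over `CP_{r,n}`, which is the exponent of `j'` on the right.
-/

namespace Nat.Partition

variable {n : ℕ}

lemma count_parts_le (ρ : n.Partition) (i : ℕ) : ρ.parts.count i ≤ n :=
  calc ρ.parts.count i ≤ Multiset.card ρ.parts := Multiset.count_le_card _ _
  _ = Multiset.card ρ.parts • 1 := by simp
  _ ≤ ρ.parts.sum := Multiset.card_nsmul_le_sum fun _ hx => ρ.parts_pos hx
  _ = n := ρ.parts_sum

def trade (ρ : n.Partition) {a b s t : ℕ} (hb : 0 < b) (hst : s * a = t * b)
    (hle : Multiset.replicate s a ≤ ρ.parts) : n.Partition where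
  parts := (ρ.parts - Multiset.replicate s a) + Multiset.replicate t b
  parts_pos := by
    intro x hx
    rcases Multiset.mem_add.mp hx with h | h
    · exact ρ.parts_pos (Multiset.mem_of_le (Multiset.sub_le_self _ _) h)
    · rwa [Multiset.eq_of_mem_replicate h]
  parts_sum := by
    have h := congrArg Multiset.sum (tsub_add_cancel_of_le hle)
    rw [Multiset.sum_add, ρ.parts_sum, Multiset.sum_replicate, smul_eq_mul] at h
    rw [Multiset.sum_add, Multiset.sum_replicate, smul_eq_mul]
    omega

lemma trade_parts (ρ : n.Partition) {a b s t : ℕ} (hb : 0 < b) (hst : s * a = t * b)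
    (hle : Multiset.replicate s a ≤ ρ.parts) :
    (ρ.trade hb hst hle).parts = (ρ.parts - Multiset.replicate s a) + Multiset.replicate t b :=
  rfl

lemma trade_trade (ρ : n.Partition) {a b s t : ℕ} (ha : 0 < a) (hb : 0 < b)
    (hst : s * a = t * b) (hle : Multiset.replicate s a ≤ ρ.parts)
    (hle' : Multiset.replicate t b ≤ (ρ.trade hb hst hle).parts) :
    (ρ.trade hb hst hle).trade ha hst.symm hle' = ρ :=
  Nat.Partition.ext <| by
    rw [trade_parts, trade_parts, add_tsub_cancel_right, tsub_add_cancel_of_le hle]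

lemma card_filter_le_count_eq_of_mul_eq (P : ℕ → Prop) {a b s t : ℕ} (ha : 0 < a) (hb : 0 < b)
    (hPa : P a) (hPb : P b) (hst : s * a = t * b) :
    (univ.filter fun ρ : n.Partition => (∀ p ∈ ρ.parts, P p) ∧ s ≤ ρ.parts.count a).card =
      (univ.filter fun ρ : n.Partition => (∀ p ∈ ρ.parts, P p) ∧ t ≤ ρ.parts.count b).card := by
  have mem_trade : ∀ {a b s t : ℕ} (hb : 0 < b) (hst : s * a = t * b), P b →
      ∀ ρ (hρ : ρ ∈ univ.filter fun ρ : n.Partition => (∀ p ∈ ρ.parts, P p) ∧ s ≤ ρ.parts.count a),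
      ρ.trade hb hst (Multiset.le_count_iff_replicate_le.mp (mem_filter.mp hρ).2.2) ∈
        univ.filter fun ρ : n.Partition => (∀ p ∈ ρ.parts, P p) ∧ t ≤ ρ.parts.count b := by
    intro a b s t hb hst hPb ρ hρ
    obtain ⟨-, hP, -⟩ := mem_filter.mp hρ
    refine mem_filter.mpr ⟨mem_univ _, fun p hp => ?_, ?_⟩
    · rcases Multiset.mem_add.mp hp with h | h
      · exact hP p (Multiset.mem_of_le (Multiset.sub_le_self _ _) h)
      · rwa [Multiset.eq_of_mem_replicate h]
    · rw [trade_parts, Multiset.count_add, Multiset.count_replicate_self]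
      omega
  exact card_bij' (fun _ _ => _) (fun _ _ => _) (mem_trade hb hst hPb) (mem_trade ha hst.symm hPa)
    (fun ρ _ => trade_trade ρ ha hb hst _ _) (fun σ _ => trade_trade σ hb ha hst.symm _ _)

end Nat.Partition

lemma filter_Icc_le_eq {x n : ℕ} (h : x ≤ n) : (Icc 1 n).filter (· ≤ x) = Icc 1 x := by
  ext
  simp only [mem_filter, mem_Icc]
  omega

lemma card_filter_Icc_le {x n : ℕ} (h : x ≤ n) : ((Icc 1 n).filter (· ≤ x)).card = x := by
  rw [filter_Icc_le_eq h, Nat.card_Icc, Nat.add_sub_cancel]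

lemma prod_filter_Icc_le {x n : ℕ} (h : x ≤ n) : ∏ j ∈ (Icc 1 n).filter (· ≤ x), j = x ! := by
  rw [filter_Icc_le_eq h, ← Ico_add_one_right_eq_Icc, prod_Ico_id_eq_factorial]

lemma prod_factorial_count_eq_prod_pow_numGE {n : ℕ} (ρ : n.Partition) :
    ∏ i ∈ ρ.parts.toFinset, (ρ.parts.count i)! = ∏ j ∈ Icc 1 n, j ^ numGE ρ j := by
  calc ∏ i ∈ ρ.parts.toFinset, (ρ.parts.count i)!
      = ∏ i ∈ ρ.parts.toFinset, ∏ j ∈ (Icc 1 n).filter (· ≤ ρ.parts.count i), j :=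
        prod_congr rfl fun i _ => (prod_filter_Icc_le (ρ.count_parts_le i)).symm
    _ = ∏ j ∈ Icc 1 n, ∏ i ∈ ρ.parts.toFinset.filter (j ≤ ρ.parts.count ·), j := by
        simp only [prod_filter]
        exact prod_comm
    _ = ∏ j ∈ Icc 1 n, j ^ numGE ρ j := by simp only [prod_const, numGE]

lemma pos_of_not_dvd {r j : ℕ} (h : ¬ r ∣ j) : 0 < j :=
  Nat.pos_of_ne_zero fun hj => h (hj ▸ dvd_zero r)

lemma lt_pow_mul {r j : ℕ} (hr : 2 ≤ r) (hj : 0 < j) (k : ℕ) : k < r ^ k * j :=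
  (Nat.lt_pow_self (by omega)).trans_le (Nat.le_mul_of_pos_right _ hj)

lemma eq_of_pow_mul_eq_pow_mul {r a b k l : ℕ} (hr : r ≠ 0) (ha : ¬ r ∣ a) (hb : ¬ r ∣ b)
    (h : r ^ k * a = r ^ l * b) : k = l ∧ a = b := by
  wlog hkl : k ≤ l generalizing a b k l
  · exact (this hb ha h.symm (by omega)).imp Eq.symm Eq.symm
  obtain ⟨d, rfl⟩ := Nat.exists_eq_add_of_le hkl
  rw [pow_add, mul_assoc] at h
  have had : a = r ^ d * b := Nat.eq_of_mul_eq_mul_left (pow_pos (Nat.pos_of_ne_zero hr) k) h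
  cases d with
  | zero => simpa using had
  | succ d => exact absurd (had ▸ Dvd.intro _ (by rw [pow_succ', mul_assoc])) ha

def admissibleParts (r n : ℕ) : Finset ℕ := (Icc 1 n).filter (¬ r ∣ ·)

lemma mem_admissibleParts {r n j : ℕ} : j ∈ admissibleParts r n ↔ j ∈ Icc 1 n ∧ ¬ r ∣ j :=
  mem_filter

-- Every `j ∈ [1, n]` is uniquely `r ^ k * j'` with `r ∤ j'`, and then `j' ≤ n` and `k < n`.
@[to_additive]
lemma prod_Icc_eq_prod_admissibleParts_prod {M : Type*} [CommMonoid M] {r : ℕ} (hr : 2 ≤ r)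
    (n : ℕ) (g : ℕ → M) (hg : ∀ j, n < j → g j = 1) :
    ∏ j ∈ Icc 1 n, g j = ∏ j ∈ admissibleParts r n, ∏ k ∈ range n, g (r ^ k * j) := by
  rw [← prod_product']
  symm
  refine prod_bij_ne_one (fun p _ _ => r ^ p.2 * p.1) ?_ ?_ ?_ fun _ _ _ => rfl
  · rintro ⟨j, k⟩ hp hg1
    have hj := (mem_admissibleParts.mp (mem_product.mp hp).1).1
    refine mem_Icc.mpr ⟨Nat.mul_pos (pow_pos (by omega) k) (mem_Icc.mp hj).1, ?_⟩
    by_contra hlt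
    exact hg1 (hg _ (not_le.mp hlt))
  · rintro ⟨j, k⟩ hp - ⟨j', k'⟩ hp' - h
    obtain ⟨hk, hj⟩ := eq_of_pow_mul_eq_pow_mul (by omega)
      (mem_admissibleParts.mp (mem_product.mp hp).1).2
      (mem_admissibleParts.mp (mem_product.mp hp').1).2 h
    exact Prod.ext hj hk
  · intro m hm hgm
    obtain ⟨hm1, hmn⟩ := mem_Icc.mp hm
    obtain ⟨k, j, hj, rfl⟩ := Nat.exists_eq_pow_mul_and_not_dvd (show m ≠ 0 by omega) r (by omega)
    have hjle : j ≤ r ^ k * j := Nat.le_mul_of_pos_left j (pow_pos (by omega) k)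
    have hklt := lt_pow_mul hr (pos_of_not_dvd hj) k
    have hjn : j ∈ admissibleParts r n :=
      mem_admissibleParts.mpr ⟨mem_Icc.mpr ⟨pos_of_not_dvd hj, by omega⟩, hj⟩
    exact ⟨(j, k), mem_product.mpr ⟨hjn, mem_range.mpr (by omega)⟩, hgm, rfl⟩

section Regular

variable {r n : ℕ}

lemma mem_CP {ρ : n.Partition} : ρ ∈ CP r n ↔ ∀ p ∈ ρ.parts, ¬ r ∣ p := by
  simp [CP]

lemma parts_toFinset_subset_admissibleParts {ρ : n.Partition} (hρ : ρ ∈ CP r n) :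
    ρ.parts.toFinset ⊆ admissibleParts r n := fun i hi => by
  rw [Multiset.mem_toFinset] at hi
  exact mem_admissibleParts.mpr
    ⟨mem_Icc.mpr ⟨ρ.parts_pos hi, Nat.Partition.le_of_mem_parts hi⟩, mem_CP.mp hρ i hi⟩

lemma numGE_eq_card_filter_admissibleParts {ρ : n.Partition} (hρ : ρ ∈ CP r n) {s : ℕ}
    (hs : 1 ≤ s) : numGE ρ s = ((admissibleParts r n).filter (s ≤ ρ.parts.count ·)).card := by
  refine congrArg card (ext fun i => ?_)
  simp only [mem_filter, Multiset.mem_toFinset]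
  exact ⟨fun h => ⟨parts_toFinset_subset_admissibleParts hρ (Multiset.mem_toFinset.mpr h.1), h.2⟩,
    fun h => ⟨Multiset.count_pos.mp (by omega), h.2⟩⟩

noncomputable def numCountGE (r n i s : ℕ) : ℕ := ((CP r n).filter (s ≤ ·.parts.count i)).card

lemma numCountGE_eq_of_mul_eq {a b s t : ℕ} (ha : ¬ r ∣ a) (hb : ¬ r ∣ b) (hst : s * a = t * b) :
    numCountGE r n a s = numCountGE r n b t := by
  simp only [numCountGE, CP, filter_filter]
  convert Nat.Partition.card_filter_le_count_eq_of_mul_eq (¬ r ∣ ·)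
    (pos_of_not_dvd ha) (pos_of_not_dvd hb) ha hb hst

lemma numCountGE_eq_zero_of_lt {i s : ℕ} (hs : n < s) : numCountGE r n i s = 0 :=
  card_eq_zero.mpr <| filter_eq_empty_iff.mpr fun ρ _ h => by
    have := ρ.count_parts_le i
    omega

lemma W_eq_zero_of_lt {s : ℕ} (hs : n < s) : W r s n = 0 :=
  sum_eq_zero fun ρ _ => card_eq_zero.mpr <| filter_eq_empty_iff.mpr fun i _ h => by
    have := ρ.count_parts_le i
    omega

lemma W_eq_sum_numCountGE {s : ℕ} (hs : 1 ≤ s) :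
    W r s n = ∑ i ∈ admissibleParts r n, numCountGE r n i s := by
  rw [W, sum_congr rfl fun ρ hρ => numGE_eq_card_filter_admissibleParts hρ hs]
  exact sum_card_bipartiteAbove_eq_sum_card_bipartiteBelow _

lemma sum_count_eq_sum_numCountGE (i : ℕ) :
    ∑ ρ ∈ CP r n, ρ.parts.count i = ∑ s ∈ Icc 1 n, numCountGE r n i s := by
  rw [sum_congr rfl fun ρ _ => (card_filter_Icc_le (ρ.count_parts_le i)).symm]
  exact sum_card_bipartiteAbove_eq_sum_card_bipartiteBelow _

lemma W_pow_mul_eq_zero (hr : 2 ≤ r) {j k : ℕ} (hj : ¬ r ∣ j) (h : n < j ∨ n ≤ k) :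
    W r (r ^ k * j) n = 0 := by
  have hjle : j ≤ r ^ k * j := Nat.le_mul_of_pos_left j (pow_pos (by omega) k)
  have hklt := lt_pow_mul hr (pos_of_not_dvd hj) k
  exact W_eq_zero_of_lt (by omega)

lemma cExp_eq_sum (hr : 2 ≤ r) :
    cExp r n = ∑ j ∈ admissibleParts r n, ∑ k ∈ range n, k * W r (r ^ k * j) n := by
  have inner : ∀ j, (∑' k : ℕ, if ¬ r ∣ j then k * W r (r ^ k * j) n else 0) =
      ∑ k ∈ range n, if ¬ r ∣ j then k * W r (r ^ k * j) n else 0 := fun j =>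
    tsum_eq_sum fun k hk => by
      split_ifs with hj
      · rfl
      · rw [W_pow_mul_eq_zero hr hj (Or.inr (by simpa using hk)), mul_zero]
  rw [cExp, tsum_congr inner, tsum_eq_sum (s := admissibleParts r n)]
  · exact sum_congr rfl fun j hj => sum_congr rfl fun k _ => if_pos (mem_admissibleParts.mp hj).2
  · intro j hj
    refine sum_eq_zero fun k _ => ?_
    split_ifs with hrj
    · rfl
    · have hnj : n < j := by
        by_contra hle
        exact hj (mem_admissibleParts.mpr ⟨mem_Icc.mpr ⟨pos_of_not_dvd hrj, by omega⟩, hrj⟩)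
      rw [W_pow_mul_eq_zero hr hrj (Or.inl hnj), mul_zero]

lemma sum_W_pow_mul_eq_sum_count (hr : 2 ≤ r) {j : ℕ} (hj : j ∈ admissibleParts r n) :
    ∑ k ∈ range n, W r (r ^ k * j) n = ∑ ρ ∈ CP r n, ρ.parts.count j := by
  obtain ⟨hj1, hrj⟩ := mem_admissibleParts.mp hj
  calc ∑ k ∈ range n, W r (r ^ k * j) n
      = ∑ k ∈ range n, ∑ i ∈ admissibleParts r n, numCountGE r n i (r ^ k * j) :=
        sum_congr rfl fun k _ =>
          W_eq_sum_numCountGE (Nat.mul_pos (pow_pos (by omega) k) (mem_Icc.mp hj1).1)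
    _ = ∑ i ∈ admissibleParts r n, ∑ k ∈ range n, numCountGE r n j (r ^ k * i) := by
        rw [sum_comm]
        refine sum_congr rfl fun i hi => sum_congr rfl fun k _ => ?_
        exact numCountGE_eq_of_mul_eq (mem_admissibleParts.mp hi).2 hrj (by ring)
    _ = ∑ s ∈ Icc 1 n, numCountGE r n j s :=
        (sum_Icc_eq_sum_admissibleParts_sum hr n _ fun _ hs => numCountGE_eq_zero_of_lt hs).symm
    _ = ∑ ρ ∈ CP r n, ρ.parts.count j := (sum_count_eq_sum_numCountGE j).symm

lemma prod_CP_prod_factorial_count_eq :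
    ∏ ρ ∈ CP r n, ∏ i ∈ ρ.parts.toFinset, (ρ.parts.count i)! = ∏ j ∈ Icc 1 n, j ^ W r j n := by
  rw [prod_congr rfl fun ρ _ => prod_factorial_count_eq_prod_pow_numGE ρ, prod_comm]
  exact prod_congr rfl fun j _ => prod_pow_eq_pow_sum _ _ _

lemma prod_CP_parts_prod_eq :
    ∏ ρ ∈ CP r n, ρ.parts.prod = ∏ i ∈ admissibleParts r n, i ^ ∑ ρ ∈ CP r n, ρ.parts.count i := by
  have h : ∀ ρ ∈ CP r n, ρ.parts.prod = ∏ i ∈ admissibleParts r n, i ^ ρ.parts.count i :=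
    fun ρ hρ => by
      rw [prod_multiset_count]
      refine prod_subset (parts_toFinset_subset_admissibleParts hρ) fun i _ hi => ?_
      rw [Multiset.count_eq_zero_of_notMem (mt Multiset.mem_toFinset.mpr hi), pow_zero]
  rw [prod_congr rfl h, prod_comm]
  exact prod_congr rfl fun i _ => prod_pow_eq_pow_sum _ _ _

end Regular

theorem prod_factorials_eq (r n : ℕ) (hr : 2 ≤ r) :
    (∏ ρ ∈ CP r n, ∏ i ∈ ρ.parts.toFinset, (ρ.parts.count i)!) =
    r ^ cExp r n * ∏ ρ ∈ CP r n, ρ.parts.prod := by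
  calc ∏ ρ ∈ CP r n, ∏ i ∈ ρ.parts.toFinset, (ρ.parts.count i)!
      = ∏ j ∈ Icc 1 n, j ^ W r j n := prod_CP_prod_factorial_count_eq
    _ = ∏ j ∈ admissibleParts r n, ∏ k ∈ range n, (r ^ k * j) ^ W r (r ^ k * j) n :=
        prod_Icc_eq_prod_admissibleParts_prod hr n _ fun j hj => by
          rw [W_eq_zero_of_lt hj, pow_zero]
    _ = r ^ (∑ j ∈ admissibleParts r n, ∑ k ∈ range n, k * W r (r ^ k * j) n) *
          ∏ j ∈ admissibleParts r n, j ^ ∑ k ∈ range n, W r (r ^ k * j) n := by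
        simp only [mul_pow, ← pow_mul, prod_mul_distrib, prod_pow_eq_pow_sum]
    _ = r ^ cExp r n * ∏ ρ ∈ CP r n, ρ.parts.prod := by
        rw [cExp_eq_sum hr, prod_CP_parts_prod_eq]
        exact congrArg _ (prod_congr rfl fun j hj => by rw [sum_W_pow_mul_eq_sum_count hr hj])
end

section
/- The number of 2-regular, 3-class regular partitions of n (no repeated parts, no part divisible by 3) equals the number of 3-regular, 2-class regular partitions of n (all parts odd, each part occurring at most twice). -/
open Nat Finset
open scoped Classical

/-!
Both sides count the partitions of `n` into parts prime to `6`, by Glaisher's theorem relative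
to a class `P` of parts closed under multiplication by `m`: partitions into `P`-parts of
multiplicities `< m` are equinumerous with partitions into `P`-parts not divisible by `m`.
Multiplied by `∏_{P k} (1 - X^k)`, the two generating functions become `∏_{P k} (1 - X^{km})` and
`∏_{P k, m ∣ k} (1 - X^k)`, which agree because `k ↦ km` maps `P` bijectively onto the
multiples of `m` in `P`.
-/

namespace Nat.Partition

open PowerSeries PowerSeries.WithPiTopology

variable {m : ℕ} {P : ℕ → Prop} [DecidablePred P]

theorem hasProd_powerSeriesMk_card_countRestricted_inter_restricted {R : Type*}
    [CommSemiring R] [TopologicalSpace R] [T2Space R] (hm : 0 < m) :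
    HasProd (fun i ↦ if P (i + 1) then ∑ j ∈ range m, X ^ ((i + 1) * j) else 1)
      (PowerSeries.mk fun n ↦ (#(countRestricted n m ∩ restricted n P) : R)) := by
  convert! hasProd_genFun (fun i c ↦ if P i ∧ c < m then (1 : R) else 0) using 1
  · ext1 i
    split_ifs with hi
    · rw [sum_range_eq_add_Ico _ hm, sum_Ico_eq_sum_range,
        tsum_eq_sum (s := range (m - 1)) (fun j hj ↦ by simp_all)]
      simp only [hi, true_and, ite_smul, one_smul, zero_smul, mul_zero, pow_zero]
      congr 1
      refine sum_congr rfl fun j hj ↦ ?_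
      rw [if_pos (by grind), add_comm 1 j]
    · simp [hi]
  · simp_rw [genFun, countRestricted, restricted, ← filter_and, card_filter, Finsupp.prod,
      prod_boole]
    simp [and_comm, forall_and]

section CommRing

variable (R : Type*) [CommRing R] [TopologicalSpace R]

theorem multipliable_ite_one_sub_X_pow (P : ℕ → Prop) [DecidablePred P] :
    Multipliable fun i ↦ if P (i + 1) then (1 : R⟦X⟧) - X ^ (i + 1) else 1 := by
  nontriviality R
  have : (fun i ↦ if P (i + 1) then (1 : R⟦X⟧) - X ^ (i + 1) else 1) =
      fun i ↦ 1 + if P (i + 1) then -X ^ (i + 1) else 0 := by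
    ext1 i
    split_ifs <;> ring
  rw [this]
  apply multipliable_one_add_of_tendsto_order_atTop_nhds_top
  refine ENat.tendsto_nhds_top_iff_natCast_lt.mpr fun n ↦ Filter.eventually_atTop.mpr ⟨n, ?_⟩
  intro i hi
  split_ifs
  · rw [order_neg, order_X_pow]
    exact_mod_cast Nat.lt_add_one_iff.mpr hi
  · simp

theorem tprod_ite_one_sub_X_pow_ne_zero [T2Space R] [Nontrivial R] (P : ℕ → Prop)
    [DecidablePred P] : ∏' i, (if P (i + 1) then (1 : R⟦X⟧) - X ^ (i + 1) else 1) ≠ 0 := by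
  intro h
  have := congrArg constantCoeff h
  simp [(multipliable_ite_one_sub_X_pow R P).map_tprod _ (continuous_constantCoeff R),
    apply_ite] at this

variable {R}

theorem tprod_ite_one_sub_X_pow_mul_eq_tprod_ite_dvd (hm : 0 < m) (hP : ∀ k, P (m * k) ↔ P k) :
    ∏' i, (if P (i + 1) then (1 : R⟦X⟧) - X ^ ((i + 1) * m) else 1) =
      ∏' i, if P (i + 1) ∧ m ∣ i + 1 then (1 : R⟦X⟧) - X ^ (i + 1) else 1 := by
  have hpos : ∀ i, 1 ≤ (i + 1) * m := fun i ↦ Nat.one_le_iff_ne_zero.2 (by positivity)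
  have hinj : Function.Injective fun i ↦ (i + 1) * m - 1 := by
    intro a b h
    have := Nat.eq_of_mul_eq_mul_right hm ((Nat.sub_one_cancel (hpos a) (hpos b)) h)
    omega
  refine Eq.trans (tprod_congr fun i ↦ ?_) (hinj.tprod_eq ?_)
  · rw [Nat.sub_add_cancel (hpos i), mul_comm _ m]
    simp [hP]
  · intro b hb
    obtain ⟨j, hj⟩ : m ∣ b + 1 := by by_contra h; simp [h] at hb
    obtain ⟨k, rfl⟩ : ∃ k, j = k + 1 := Nat.exists_eq_succ_of_ne_zero (by rintro rfl; simp at hj)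
    exact ⟨k, by simp only; rw [mul_comm, ← hj]; omega⟩

end CommRing

theorem card_countRestricted_inter_restricted_eq_card_restricted (n : ℕ) (hm : 0 < m)
    (hP : ∀ k, P (m * k) ↔ P k) :
    #(countRestricted n m ∩ restricted n P) = #(restricted n fun i ↦ P i ∧ ¬ m ∣ i) := by
  suffices (PowerSeries.mk fun n ↦ (#(countRestricted n m ∩ restricted n P) : ℤ)) =
      PowerSeries.mk fun n ↦ (#(restricted n fun i ↦ P i ∧ ¬ m ∣ i) : ℤ) by
    simpa using PowerSeries.ext_iff.mp this n
  apply mul_right_cancel₀ (tprod_ite_one_sub_X_pow_ne_zero ℤ P)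
  have hg := (multipliable_ite_one_sub_X_pow ℤ P).hasProd
  rw [← ((hasProd_powerSeriesMk_card_countRestricted_inter_restricted hm).mul hg).tprod_eq,
    ← ((hasProd_powerSeriesMk_card_restricted ℤ _).mul hg).tprod_eq]
  calc _ = ∏' i, if P (i + 1) then (1 : ℤ⟦X⟧) - X ^ ((i + 1) * m) else 1 :=
        tprod_congr fun i ↦ ?_
    _ = ∏' i, if P (i + 1) ∧ m ∣ i + 1 then (1 : ℤ⟦X⟧) - X ^ (i + 1) else 1 :=
        tprod_ite_one_sub_X_pow_mul_eq_tprod_ite_dvd hm hP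
    _ = _ := tprod_congr fun i ↦ ?_
  · split_ifs
    · simp_rw [pow_mul]
      exact geom_sum_mul_neg _ _
    · exact mul_one 1
  · by_cases hi : P (i + 1)
    · by_cases hd : m ∣ i + 1
      · simp [hi, hd]
      · simp only [hi, hd, not_false_eq_true, and_self, and_false, if_true, if_false]
        simp_rw [pow_mul]
        exact (tsum_pow_mul_one_sub_of_constantCoeff_eq_zero (by simp)).symm
    · simp [hi]

theorem filter_forall_mem_and_forall_count_lt (n : ℕ) (hm : 0 < m) :
    univ.filter (fun l : n.Partition ↦ (∀ i ∈ l.parts, P i) ∧ ∀ i, l.parts.count i < m) =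
      countRestricted n m ∩ restricted n P := by
  ext l
  simp only [countRestricted, restricted, mem_inter, mem_filter, mem_univ, true_and]
  refine ⟨fun ⟨hP, hc⟩ ↦ ⟨fun i _ ↦ hc i, hP⟩, fun ⟨hc, hP⟩ ↦ ⟨hP, fun i ↦ ?_⟩⟩
  by_cases hi : i ∈ l.parts
  · exact hc i hi
  · rwa [Multiset.count_eq_zero_of_notMem hi]

end Nat.Partition

open Nat.Partition in
/-- The number of partitions of `n` with no repeated parts and no part divisible by `3`
equals the number of partitions of `n` with all parts odd, each occurring at most twice. -/
theorem card_two_regular_three_classRegular_eq (n : ℕ) :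
    (Finset.univ.filter (fun l : n.Partition =>
        (∀ p ∈ l.parts, ¬ 3 ∣ p) ∧ ∀ i, l.parts.count i < 2)).card =
    (Finset.univ.filter (fun l : n.Partition =>
        (∀ p ∈ l.parts, ¬ 2 ∣ p) ∧ ∀ i, l.parts.count i < 3)).card := by
  rw [filter_forall_mem_and_forall_count_lt n two_pos,
    filter_forall_mem_and_forall_count_lt n three_pos,
    card_countRestricted_inter_restricted_eq_card_restricted n two_pos (by omega),
    card_countRestricted_inter_restricted_eq_card_restricted n three_pos (by omega)]
  simp_rw [and_comm]
end

section
/- For r ≥ 2 and j with 1 ≤ j ≤ r-1, the generating function Σ_n X_{r,j,n} q^n equals Φ_r(q) · Σ_{k ≥ 0} q^{rk+j}/(1 - q^{rk+j}), where X_{r,j,n} counts, over all partitions of n with no part divisible by r, the total number of parts congruent to j mod r. -/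
open Nat Finset PowerSeries
open scoped Classical

/-- `X_{r,j,n}`: total number of parts `≡ j (mod r)` over all `r`-class regular partitions. -/
noncomputable def Xrjn (r j n : ℕ) : ℕ :=
  ∑ ρ ∈ CP r n, Multiset.card (ρ.parts.filter (fun p => p % r = j))

/-- Truncation of `Φ_r(q) = ∏_{k ≥ 1, r ∤ k} (1 - q^k)⁻¹` at `k ≤ N`. -/
noncomputable def PhiTrunc (r N : ℕ) : PowerSeries ℚ :=
  ∏ k ∈ Finset.Icc 1 N, if ¬ r ∣ k then (1 - (PowerSeries.X : PowerSeries ℚ) ^ k)⁻¹ else 1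

/-!
Since `q^m / (1 - q^m) = ∑_{t ≥ 1} q^{tm}`, the `n`-th coefficient of `Φ_r(q) q^m / (1 - q^m)` is
`∑_{t ≥ 1} #CP_{r, n - tm}`. When `r ∤ m`, adding `t` parts equal to `m` is a bijection from
`CP_{r, n - tm}` onto the partitions in `CP_{r, n}` with at least `t` parts equal to `m`, so this
sum is the total number of parts equal to `m` over `CP_{r, n}`. Summing over `m = rk + j` counts
all parts congruent to `j` modulo `r`.
-/

theorem Finset.sum_eq_sum_range_card_filter_lt {α : Type*} (s : Finset α) (c : α → ℕ) {K : ℕ}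
    (hc : ∀ a ∈ s, c a ≤ K) : ∑ a ∈ s, c a = ∑ t ∈ range K, #{a ∈ s | t < c a} := by
  simp_rw [card_filter]
  rw [sum_comm]
  refine sum_congr rfl fun a ha ↦ ?_
  rw [← card_filter]
  convert (card_range (c a)).symm using 2
  ext t
  simp only [mem_filter, mem_range, and_iff_right_iff_imp]
  exact fun h ↦ h.trans_le (hc a ha)

theorem Multiset.card_filter_mod_eq_sum_count {s : Multiset ℕ} {r j K : ℕ} (hj : j < r)
    (hs : ∀ x ∈ s, x / r < K) :
    card (s.filter (· % r = j)) = ∑ k ∈ Finset.range K, s.count (r * k + j) := by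
  have hinj : Set.InjOn (r * · + j) (Finset.range K) := fun a _ b _ hab ↦ by
    simpa [(Nat.zero_le j).trans_lt hj |>.ne'] using hab
  rw [← sum_count_eq_card (s := (Finset.range K).image (r * · + j)), sum_image hinj]
  · refine sum_congr rfl fun k _ ↦ count_filter_of_pos ?_
    rw [Nat.mul_add_mod, Nat.mod_eq_of_lt hj]
  · intro x hx
    rw [mem_filter] at hx
    refine mem_image.mpr ⟨x / r, mem_range.mpr (hs x hx.1), ?_⟩
    rw [← hx.2]
    exact Nat.div_add_mod x r

namespace Nat.Partition

theorem count_mul_le {n : ℕ} (ρ : n.Partition) (m : ℕ) : ρ.parts.count m * m ≤ n := by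
  obtain ⟨u, hu⟩ := Multiset.le_iff_exists_add.mp <|
    Multiset.le_count_iff_replicate_le.mp (le_refl (ρ.parts.count m))
  have := congrArg Multiset.sum hu
  rw [ρ.parts_sum, Multiset.sum_add, Multiset.sum_replicate, smul_eq_mul] at this
  omega

variable {p : ℕ → Prop} [DecidablePred p]

theorem card_restricted_sub_eq_card_filter_le_count {n m t : ℕ} (hp : p m) (hm : 0 < m)
    (h : t * m ≤ n) :
    #(restricted (n - t * m) p) = #{ρ ∈ restricted n p | t ≤ ρ.parts.count m} := by
  have replicate_le {ρ : n.Partition} (hρ : ρ ∈ {ρ ∈ restricted n p | t ≤ ρ.parts.count m}) :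
      .replicate t m ≤ ρ.parts :=
    Multiset.le_count_iff_replicate_le.mp (mem_filter.mp hρ).2
  refine card_bij' (fun σ _ ↦ ⟨σ.parts + .replicate t m, ?_, ?_⟩)
    (fun ρ hρ ↦ ⟨ρ.parts - .replicate t m, ?_, ?_⟩) ?_ ?_ ?_ ?_
  · intro q hq
    rcases Multiset.mem_add.mp hq with hq | hq
    exacts [σ.parts_pos hq, Multiset.eq_of_mem_replicate hq ▸ hm]
  · rw [Multiset.sum_add, σ.parts_sum, Multiset.sum_replicate, smul_eq_mul, Nat.sub_add_cancel h]
  · exact fun hq ↦ ρ.parts_pos (Multiset.mem_of_le (Multiset.sub_le_self _ _) hq)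
  · have := congrArg Multiset.sum (tsub_add_cancel_of_le (replicate_le hρ))
    rw [Multiset.sum_add, ρ.parts_sum, Multiset.sum_replicate, smul_eq_mul] at this
    omega
  · intro σ hσ
    simp only [restricted, mem_filter, mem_univ, true_and] at hσ ⊢
    refine ⟨fun q hq ↦ ?_, by simp⟩
    rcases Multiset.mem_add.mp hq with hq | hq
    exacts [hσ q hq, Multiset.eq_of_mem_replicate hq ▸ hp]
  · intro ρ hρ
    simp only [restricted, mem_filter, mem_univ, true_and] at hρ ⊢
    exact fun q hq ↦ hρ.1 q (Multiset.mem_of_le (Multiset.sub_le_self _ _) hq)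
  · intro σ _
    ext1
    exact add_tsub_cancel_right _ _
  · intro ρ hρ
    ext1
    exact tsub_add_cancel_of_le (replicate_le hρ)

theorem sum_count_restricted {n m : ℕ} (hp : p m) (hm : 0 < m) :
    ∑ ρ ∈ restricted n p, ρ.parts.count m =
      ∑ t ∈ range (n / m), #(restricted (n - (t + 1) * m) p) := by
  rw [sum_eq_sum_range_card_filter_lt _ _ fun ρ _ ↦
    (Nat.le_div_iff_mul_le hm).mpr (ρ.count_mul_le m)]
  refine sum_congr rfl fun t ht ↦ (card_restricted_sub_eq_card_filter_le_count hp hm ?_).symm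
  exact (Nat.le_div_iff_mul_le hm).mp (mem_range.mp ht)

end Nat.Partition

open scoped PowerSeries.WithPiTopology in
theorem PowerSeries.tsum_X_pow_mul_eq_inv_one_sub {k : Type*} [Field k] [TopologicalSpace k]
    [IsTopologicalRing k] [T2Space k] {i : ℕ} (hi : 0 < i) :
    ∑' j, (X : k⟦X⟧) ^ (i * j) = (1 - X ^ i)⁻¹ := by
  rw [PowerSeries.eq_inv_iff_mul_eq_one (by simp [hi.ne'])]
  simp_rw [pow_mul]
  exact WithPiTopology.tsum_pow_mul_one_sub_of_constantCoeff_eq_zero (by simp [hi.ne'])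

theorem PowerSeries.coeff_mul_X_pow_mul_inv_one_sub_X_pow {k : Type*} [Field k] (F : k⟦X⟧)
    {m : ℕ} (hm : 0 < m) (n : ℕ) :
    coeff n (F * (X ^ m * (1 - X ^ m)⁻¹)) = ∑ t ∈ range (n / m), coeff (n - (t + 1) * m) F := by
  have hG : F * (X ^ m * (1 - X ^ m)⁻¹) = X ^ m * (F + F * (X ^ m * (1 - X ^ m)⁻¹)) := by
    have := PowerSeries.inv_mul_cancel (1 - X ^ m : k⟦X⟧) (by simp [hm.ne'])
    linear_combination F * X ^ m * this
  induction n using Nat.strong_induction_on with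
  | _ n ih =>
    rw [hG, coeff_X_pow_mul']
    split_ifs with h
    · rw [map_add, ih (n - m) (by omega), Nat.div_eq_sub_div hm h, sum_range_succ']
      have hsub (t : ℕ) : n - (t + 1 + 1) * m = n - m - (t + 1) * m := by
        rw [Nat.sub_sub, add_mul, one_mul, add_comm m]
      simp only [hsub, zero_add, one_mul]
      exact add_comm _ _
    · rw [Nat.div_eq_of_lt (not_le.mp h), range_zero, sum_empty]

theorem CP_eq_restricted (r n : ℕ) : CP r n = Nat.Partition.restricted n (¬ r ∣ ·) := rfl

open scoped PowerSeries.WithPiTopology in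
theorem PhiTrunc_eq_powerSeriesMk_card_restricted (r N : ℕ) :
    PhiTrunc r N =
      PowerSeries.mk fun d ↦ (#(Nat.Partition.restricted d (fun i ↦ i ≤ N ∧ ¬ r ∣ i)) : ℚ) := by
  refine .trans ?_ <| (hasProd_prod_of_ne_finset_one (s := range N) fun i hi ↦ ?_).unique
    (Nat.Partition.hasProd_powerSeriesMk_card_restricted ℚ _)
  · rw [PhiTrunc, ← Ico_add_one_right_eq_Icc, prod_Ico_eq_prod_range, Nat.add_sub_cancel]
    refine prod_congr rfl fun i hi ↦ ?_
    rw [mem_range] at hi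
    simp only [add_comm 1 i, show i + 1 ≤ N by omega, true_and]
    by_cases h : r ∣ i + 1
    · simp [h]
    · simp [h, tsum_X_pow_mul_eq_inv_one_sub i.succ_pos]
  · simp_all

theorem coeff_PhiTrunc {r N d : ℕ} (hd : d ≤ N) : coeff d (PhiTrunc r N) = #(CP r d) := by
  rw [PhiTrunc_eq_powerSeriesMk_card_restricted, coeff_mk, CP_eq_restricted]
  congr 2
  refine filter_congr fun ρ _ ↦ forall₂_congr fun i hi ↦ ?_
  simp only [(ρ.le_of_mem_parts hi).trans hd, true_and]

theorem coeff_PhiTrunc_mul_X_pow_mul_inv_one_sub_X_pow {r m : ℕ} (hrm : ¬ r ∣ m) (hm : 0 < m)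
    (n : ℕ) :
    coeff n (PhiTrunc r n * (X ^ m * (1 - X ^ m)⁻¹)) = ∑ ρ ∈ CP r n, (ρ.parts.count m : ℚ) := by
  rw [coeff_mul_X_pow_mul_inv_one_sub_X_pow _ hm, ← Nat.cast_sum, CP_eq_restricted,
    Nat.Partition.sum_count_restricted hrm hm, Nat.cast_sum]
  exact sum_congr rfl fun t _ ↦ coeff_PhiTrunc (Nat.sub_le _ _)

theorem genFun_X_general (r j : ℕ) (hj : 1 ≤ j) (hjr : j ≤ r - 1) (n : ℕ) :
    PowerSeries.coeff (R := ℚ) n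
      (PhiTrunc r n * ∑ k ∈ Finset.range (n + 1),
        (PowerSeries.X : PowerSeries ℚ) ^ (r * k + j) *
          (1 - (PowerSeries.X : PowerSeries ℚ) ^ (r * k + j))⁻¹) = Xrjn r j n := by
  have hj_lt : j < r := by omega
  have not_dvd (k : ℕ) : ¬ r ∣ r * k + j := by
    rw [Nat.dvd_iff_mod_eq_zero, Nat.mul_add_mod, Nat.mod_eq_of_lt hj_lt]
    omega
  rw [mul_sum, map_sum, Xrjn, Nat.cast_sum, sum_congr rfl fun k _ ↦
    coeff_PhiTrunc_mul_X_pow_mul_inv_one_sub_X_pow (not_dvd k) (by omega) n, sum_comm]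
  refine sum_congr rfl fun ρ _ ↦ ?_
  rw [Multiset.card_filter_mod_eq_sum_count hj_lt fun x hx ↦ ?_, Nat.cast_sum]
  exact Nat.lt_succ_of_le <| (Nat.div_le_self x r).trans (ρ.le_of_mem_parts hx)

/-- `Σ_n X_{r,j,n} q^n = Φ_r(q) · Σ_{k ≥ 0} q^{rk+j}/(1-q^{rk+j})`, stated coefficient-wise
(the sum over `k` is truncated at `k ≤ n`, which does not change the `n`-th coefficient). -/
theorem genFun_X (r j : ℕ) (hr : 2 ≤ r) (hj : 1 ≤ j) (hjr : j ≤ r - 1) (n : ℕ) :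
    PowerSeries.coeff (R := ℚ) n
      (PhiTrunc r n * ∑ k ∈ Finset.range (n + 1),
        (PowerSeries.X : PowerSeries ℚ) ^ (r * k + j) *
          (1 - (PowerSeries.X : PowerSeries ℚ) ^ (r * k + j))⁻¹) = Xrjn r j n :=
  genFun_X_general r j hj hjr n
end

section
/- For r ≥ 2, letting CP_{r,n} denote the set of r-class regular partitions ρ ⊢ n, we have Π_{ρ ∈ CP_{r,n}} z_ρ = r^{c_{r,n}} · Π_{ρ ∈ CP_{r,n}} (Π_i ρ_i)^2, where c_{r,n} = Σ_{j: r∤j} Σ_{k≥1} k·W_{r,r^k j,n}. -/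
open Nat Finset
open scoped Classical

/-- `z_ρ = Π_i i^{m_i(ρ)} m_i(ρ)!`. -/
noncomputable def zPart {n : ℕ} (ρ : n.Partition) : ℕ :=
  ∏ i ∈ ρ.parts.toFinset, i ^ ρ.parts.count i * (ρ.parts.count i)!

section Aux

variable {r n : ℕ}

lemma part_le {ρ : n.Partition} {i : ℕ} (h : i ∈ ρ.parts) : i ≤ n := by
  have h1 : i ≤ ρ.parts.sum :=
    Multiset.single_le_sum (fun x _ => Nat.zero_le x) i h
  rwa [ρ.parts_sum] at h1

lemma count_mul_le (ρ : n.Partition) (i : ℕ) : ρ.parts.count i * i ≤ n := by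
  have h : Multiset.replicate (ρ.parts.count i) i ≤ ρ.parts :=
    Multiset.le_count_iff_replicate_le.mp le_rfl
  obtain ⟨u, hu⟩ := Multiset.le_iff_exists_add.mp h
  have hs := ρ.parts_sum
  rw [hu, Multiset.sum_add, Multiset.sum_replicate, smul_eq_mul] at hs
  omega

lemma count_le (ρ : n.Partition) (i : ℕ) : ρ.parts.count i ≤ n := by
  rcases Nat.eq_zero_or_pos i with h | h
  · subst h
    have h0 : (0:ℕ) ∉ ρ.parts := fun hc => lt_irrefl 0 (ρ.parts_pos hc)
    simp [Multiset.count_eq_zero_of_notMem h0]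
  · have h1 := count_mul_le ρ i
    have h2 : ρ.parts.count i * 1 ≤ ρ.parts.count i * i :=
      Nat.mul_le_mul_left _ h
    omega

lemma W_eq_zero {j : ℕ} (hj : n < j) : W r j n = 0 := by
  unfold W numGE
  refine Finset.sum_eq_zero fun ρ _ => ?_
  rw [Finset.card_eq_zero, Finset.filter_eq_empty_iff]
  intro i _
  have := count_le ρ i
  omega

/-- The number of `ρ ∈ CP r n` with `t ≤ m_s(ρ)`. -/
noncomputable def Cnt (r n s t : ℕ) : ℕ :=
  ((CP r n).filter (fun ρ => t ≤ ρ.parts.count s)).card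

lemma Cnt_eq_zero_of_dvd {s t : ℕ} (hs : r ∣ s) (ht : 0 < t) : Cnt r n s t = 0 := by
  unfold Cnt
  rw [Finset.card_eq_zero, Finset.filter_eq_empty_iff]
  intro ρ hρ hc
  have hmem : s ∈ ρ.parts := Multiset.count_pos.mp (lt_of_lt_of_le ht hc)
  exact (mem_CP.mp hρ s hmem) hs

lemma Cnt_eq_zero_of_gt {s t : ℕ} (hgt : n < t * s) : Cnt r n s t = 0 := by
  unfold Cnt
  rw [Finset.card_eq_zero, Finset.filter_eq_empty_iff]
  intro ρ _ hc
  have h1 := count_mul_le ρ s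
  have h2 : t * s ≤ ρ.parts.count s * s := Nat.mul_le_mul_right s hc
  omega

lemma Cnt_eq {s t : ℕ} (hrs : ¬ r ∣ s) (hts : t * s ≤ n) :
    Cnt r n s t = (CP r (n - t * s)).card := by
  have hs : 0 < s := Nat.pos_of_ne_zero (by rintro rfl; exact hrs (dvd_zero r))
  unfold Cnt
  refine Finset.card_bij'
    (fun ρ hρ => ⟨ρ.parts - Multiset.replicate t s,
      fun {p} hp => ρ.parts_pos (Multiset.mem_of_le (tsub_le_self) hp),
      by
        have hrep : Multiset.replicate t s ≤ ρ.parts := by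
          rw [← Multiset.le_count_iff_replicate_le]
          exact (Finset.mem_filter.mp hρ).2
        have h1 := congrArg Multiset.sum (tsub_add_cancel_of_le hrep)
        rw [Multiset.sum_add, Multiset.sum_replicate, smul_eq_mul, ρ.parts_sum] at h1
        omega⟩)
    (fun σ _ => ⟨σ.parts + Multiset.replicate t s,
      fun {p} hp => by
        rcases Multiset.mem_add.mp hp with h | h
        · exact σ.parts_pos h
        · rw [Multiset.eq_of_mem_replicate h]; exact hs,
      by rw [Multiset.sum_add, Multiset.sum_replicate, smul_eq_mul, σ.parts_sum]; omega⟩)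
    ?_ ?_ ?_ ?_
  · intro ρ hρ
    rw [mem_CP]
    intro p hp
    exact mem_CP.mp (Finset.mem_filter.mp hρ).1 p
      (Multiset.mem_of_le (tsub_le_self) hp)
  · intro σ hσ
    rw [Finset.mem_filter]
    constructor
    · rw [mem_CP]
      intro p hp
      rcases Multiset.mem_add.mp hp with h | h
      · exact mem_CP.mp hσ p h
      · rw [Multiset.eq_of_mem_replicate h]; exact hrs
    · simp only [Multiset.count_add, Multiset.count_replicate_self]
      omega
  · intro ρ hρ
    have hrep : Multiset.replicate t s ≤ ρ.parts := by
      rw [← Multiset.le_count_iff_replicate_le]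
      exact (Finset.mem_filter.mp hρ).2
    exact Nat.Partition.ext (tsub_add_cancel_of_le hrep)
  · intro σ _
    exact Nat.Partition.ext (add_tsub_cancel_right _ _)

lemma Cnt_val {s t : ℕ} (hrs : ¬ r ∣ s) :
    Cnt r n s t = if t * s ≤ n then (CP r (n - t * s)).card else 0 := by
  split_ifs with h
  · exact Cnt_eq hrs h
  · exact Cnt_eq_zero_of_gt (by omega)

lemma numGE_eq {ρ : n.Partition} {j : ℕ} (hj : 0 < j) :
    numGE ρ j = ∑ s ∈ Finset.Icc 1 n, if j ≤ ρ.parts.count s then 1 else 0 := by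
  rw [← Finset.card_filter]
  unfold numGE
  congr 1
  ext s
  simp only [Finset.mem_filter, Multiset.mem_toFinset, Finset.mem_Icc]
  constructor
  · rintro ⟨hs, hc⟩
    exact ⟨⟨ρ.parts_pos hs, part_le hs⟩, hc⟩
  · rintro ⟨_, hc⟩
    exact ⟨Multiset.count_pos.mp (by omega), hc⟩

lemma W_eq {j : ℕ} (hj : 0 < j) :
    W r j n = ∑ s ∈ Finset.Icc 1 n, Cnt r n s j := by
  unfold W
  rw [Finset.sum_congr rfl (fun ρ _ => numGE_eq hj), Finset.sum_comm]
  refine Finset.sum_congr rfl fun s _ => ?_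
  rw [Cnt, Finset.card_filter]

/-- Total multiplicity of the part `i` over `CP r n`. -/
noncomputable def Esum (r n i : ℕ) : ℕ := ∑ ρ ∈ CP r n, ρ.parts.count i

lemma Esum_eq_zero {i : ℕ} (h : r ∣ i) : Esum r n i = 0 := by
  refine Finset.sum_eq_zero fun ρ hρ => ?_
  rw [Multiset.count_eq_zero]
  intro hmem
  exact (mem_CP.mp hρ i hmem) h

lemma Esum_eq (i : ℕ) : Esum r n i = ∑ t ∈ Finset.Icc 1 n, Cnt r n i t := by
  unfold Esum
  have hcount : ∀ ρ : n.Partition,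
      ρ.parts.count i = ∑ t ∈ Finset.Icc 1 n, if t ≤ ρ.parts.count i then 1 else 0 := by
    intro ρ
    rw [← Finset.card_filter]
    have h : Finset.filter (fun t => t ≤ ρ.parts.count i) (Finset.Icc 1 n)
        = Finset.Icc 1 (ρ.parts.count i) := by
      ext t
      simp only [Finset.mem_filter, Finset.mem_Icc]
      have := count_le ρ i
      omega
    rw [h, Nat.card_Icc]
    omega
  rw [Finset.sum_congr rfl (fun ρ _ => hcount ρ), Finset.sum_comm]
  refine Finset.sum_congr rfl fun t _ => ?_
  rw [Cnt, Finset.card_filter]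

/-- The index set of pairs `(k, s)` with `r ∤ s`, `1 ≤ s`, `r^k s ≤ n`. -/
noncomputable def TT (r n : ℕ) : Finset (ℕ × ℕ) :=
  (Finset.range (n+1) ×ˢ Finset.range (n+1)).filter
    (fun p => ¬ r ∣ p.2 ∧ 1 ≤ p.2 ∧ r ^ p.1 * p.2 ≤ n)

lemma K_eq (hr : 2 ≤ r) {i : ℕ} (hi : ¬ r ∣ i) (k : ℕ) :
    r.maxPowDiv (r ^ k * i) = k := by
  have hi0 : 0 < i := Nat.pos_of_ne_zero (by rintro rfl; exact hi (dvd_zero r))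
  have h0 : r.maxPowDiv i = 0 := by
    by_contra h
    exact hi (dvd_trans (dvd_pow_self r h) (Nat.maxPowDiv.pow_dvd (p := r) (n := i)))
  exact (Nat.maxPowDiv.base_pow_mul (p := r) (by omega) hi0.ne' k).trans (by rw [show padicValNat r i = 0 from h0, Nat.zero_add])

lemma K_spec (hr : 2 ≤ r) {j : ℕ} (hj : 0 < j) :
    r ^ r.maxPowDiv j * (j / r ^ r.maxPowDiv j) = j ∧ ¬ r ∣ (j / r ^ r.maxPowDiv j) := by
  have hd := Nat.maxPowDiv.pow_dvd (p := r) (n := j)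
  have hmul : r ^ r.maxPowDiv j * (j / r ^ r.maxPowDiv j) = j := Nat.mul_div_cancel' hd
  refine ⟨hmul, ?_⟩
  rintro ⟨c, hc⟩
  have hdvd : r ^ (r.maxPowDiv j + 1) ∣ j := by
    refine ⟨c, ?_⟩
    conv_lhs => rw [← hmul, hc]
    ring
  have : r.maxPowDiv j + 1 ≤ r.maxPowDiv j := (pow_dvd_iff_le_padicValNat (show r ≠ 1 by omega) hj.ne').mp hdvd
  omega

lemma TT_maps (hr : 2 ≤ r) : ∀ p ∈ TT r n, r ^ p.1 * p.2 ∈ Finset.Icc 1 n := by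
  intro p hp
  simp only [TT, Finset.mem_filter, Finset.mem_product, Finset.mem_range] at hp
  obtain ⟨_, _, hp2, hle⟩ := hp
  have h1 : 0 < r ^ p.1 := Nat.pow_pos (by omega)
  exact Finset.mem_Icc.mpr ⟨Nat.mul_pos h1 (by omega), hle⟩

lemma TT_maps' (hr : 2 ≤ r) :
    ∀ j ∈ Finset.Icc 1 n, (r.maxPowDiv j, j / r ^ r.maxPowDiv j) ∈ TT r n := by
  intro j hj
  rw [Finset.mem_Icc] at hj
  obtain ⟨hmul, hnd⟩ := K_spec hr (show 0 < j by omega)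
  have hK : r.maxPowDiv j ≤ n := by
    have h1 : r.maxPowDiv j < 2 ^ r.maxPowDiv j := Nat.lt_two_pow_self
    have h2 : 2 ^ r.maxPowDiv j ≤ r ^ r.maxPowDiv j := Nat.pow_le_pow_left (by omega) _
    have h3 : r ^ r.maxPowDiv j ≤ j :=
      Nat.le_of_dvd (by omega) (Nat.maxPowDiv.pow_dvd (p := r) (n := j))
    omega
  have hq1 : 1 ≤ j / r ^ r.maxPowDiv j := by
    rcases Nat.eq_zero_or_pos (j / r ^ r.maxPowDiv j) with h | h
    · rw [h, Nat.mul_zero] at hmul; omega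
    · exact h
  have hq2 : j / r ^ r.maxPowDiv j ≤ n := le_trans (Nat.div_le_self _ _) hj.2
  simp only [TT, Finset.mem_filter, Finset.mem_product, Finset.mem_range]
  exact ⟨⟨by omega, by omega⟩, hnd, hq1, by rw [hmul]; exact hj.2⟩

lemma TT_left (hr : 2 ≤ r) : ∀ p ∈ TT r n,
    (r.maxPowDiv (r ^ p.1 * p.2), (r ^ p.1 * p.2) / r ^ r.maxPowDiv (r ^ p.1 * p.2)) = p := by
  intro p hp
  simp only [TT, Finset.mem_filter, Finset.mem_product, Finset.mem_range] at hp
  obtain ⟨_, hnd, _, _⟩ := hp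
  have hK := K_eq hr hnd p.1
  rw [Prod.ext_iff]
  refine ⟨hK, ?_⟩
  simp only [hK]
  exact Nat.mul_div_cancel_left _ (Nat.pow_pos (by omega))

lemma TT_right (hr : 2 ≤ r) : ∀ j ∈ Finset.Icc 1 n,
    r ^ r.maxPowDiv j * (j / r ^ r.maxPowDiv j) = j := by
  intro j hj
  rw [Finset.mem_Icc] at hj
  exact (K_spec hr (show 0 < j by omega)).1

lemma reindex_prod {M : Type*} [CommMonoid M] (hr : 2 ≤ r) (f : ℕ → M) :
    ∏ p ∈ TT r n, f (r ^ p.1 * p.2) = ∏ j ∈ Finset.Icc 1 n, f j :=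
  Finset.prod_nbij' (fun p => r ^ p.1 * p.2)
    (fun j => (r.maxPowDiv j, j / r ^ r.maxPowDiv j))
    (TT_maps hr) (TT_maps' hr) (TT_left hr) (TT_right hr) (fun _ _ => rfl)

lemma reindex_sum (hr : 2 ≤ r) (f : ℕ → ℕ) :
    ∑ p ∈ TT r n, f (r ^ p.1 * p.2) = ∑ j ∈ Finset.Icc 1 n, f j :=
  Finset.sum_nbij' (fun p => r ^ p.1 * p.2)
    (fun j => (r.maxPowDiv j, j / r ^ r.maxPowDiv j))
    (TT_maps hr) (TT_maps' hr) (TT_left hr) (TT_right hr) (fun _ _ => rfl)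

lemma rangeFilterOne : (Finset.range (n+1)).filter (fun s => 1 ≤ s) = Finset.Icc 1 n := by
  ext s
  simp only [Finset.mem_filter, Finset.mem_range, Finset.mem_Icc]
  omega

set_option maxHeartbeats 800000 in
lemma cExp_eq (hr : 2 ≤ r) :
    cExp r n = ∑ p ∈ TT r n, p.1 * W r (r ^ p.1 * p.2) n := by
  unfold cExp
  have hinner : ∀ j : ℕ, (∑' k : ℕ, if ¬ r ∣ j then k * W r (r ^ k * j) n else 0)
      = ∑ k ∈ Finset.range (n+1), if ¬ r ∣ j then k * W r (r ^ k * j) n else 0 := by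
    intro j
    refine tsum_eq_sum fun k hk => ?_
    simp only [Finset.mem_range, not_lt] at hk
    by_cases h : r ∣ j
    · rw [if_neg (by tauto)]
    · rw [if_pos h]
      have hj : 1 ≤ j := Nat.pos_of_ne_zero (by rintro rfl; exact h (dvd_zero r))
      have h1 : k < 2 ^ k := Nat.lt_two_pow_self
      have h2 : 2 ^ k ≤ r ^ k := Nat.pow_le_pow_left (by omega) k
      have h3 : r ^ k ≤ r ^ k * j := Nat.le_mul_of_pos_right _ (by omega)
      rw [W_eq_zero (by omega), Nat.mul_zero]
  rw [tsum_congr hinner]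
  rw [tsum_eq_sum (s := Finset.range (n+1)) ?_]
  swap
  · intro j hj
    simp only [Finset.mem_range, not_lt] at hj
    refine Finset.sum_eq_zero fun k _ => ?_
    by_cases h : r ∣ j
    · rw [if_neg (by tauto)]
    · rw [if_pos h]
      have h3 : j ≤ r ^ k * j := Nat.le_mul_of_pos_left _ (Nat.pow_pos (by omega))
      rw [W_eq_zero (by omega), Nat.mul_zero]
  rw [TT, Finset.sum_filter, Finset.sum_product, Finset.sum_comm]
  refine Finset.sum_congr rfl fun k _ => Finset.sum_congr rfl fun j _ => ?_
  by_cases hd : r ∣ j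
  · rw [if_neg (by tauto), if_neg (by tauto)]
  · have hj : 1 ≤ j := Nat.pos_of_ne_zero (by rintro rfl; exact hd (dvd_zero r))
    by_cases hle : r ^ k * j ≤ n
    · exact (if_pos hd).trans (if_pos ⟨hd, hj, hle⟩).symm
    · rw [if_pos hd, if_neg (by tauto), W_eq_zero (by omega), Nat.mul_zero]

lemma cExp_eq' (hr : 2 ≤ r) :
    cExp r n = ∑ j ∈ Finset.Icc 1 n, r.maxPowDiv j * W r j n := by
  rw [cExp_eq hr, ← reindex_sum hr (f := fun j => r.maxPowDiv j * W r j n)]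
  refine Finset.sum_congr rfl fun p hp => ?_
  simp only [TT, Finset.mem_filter, Finset.mem_product, Finset.mem_range] at hp
  rw [K_eq hr hp.2.1 p.1]

set_option maxHeartbeats 800000 in
lemma core (hr : 2 ≤ r) {i : ℕ} (hi : ¬ r ∣ i) :
    (∑ k ∈ Finset.range (n+1), if r ^ k * i ≤ n then W r (r ^ k * i) n else 0)
      = Esum r n i := by
  have hi1 : 1 ≤ i := Nat.pos_of_ne_zero (by rintro rfl; exact hi (dvd_zero r))
  set fi : ℕ → ℕ := fun j => if j * i ≤ n then (CP r (n - j * i)).card else 0 with hfi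
  have hfi_zero : ∀ j, n < j → fi j = 0 := by
    intro j hj
    have hle : j ≤ j * i := Nat.le_mul_of_pos_right _ (by omega)
    simp only [hfi]
    rw [if_neg (by omega)]
  have hW : ∀ k : ℕ,
      (if r ^ k * i ≤ n then W r (r ^ k * i) n else 0)
        = ∑ s ∈ Finset.Icc 1 n, if ¬ r ∣ s then fi (r ^ k * s) else 0 := by
    intro k
    have hpos : 0 < r ^ k * i :=
      Nat.mul_pos (Nat.pow_pos (by omega)) (by omega)
    have hsum : W r (r ^ k * i) n
        = ∑ s ∈ Finset.Icc 1 n, if ¬ r ∣ s then fi (r ^ k * s) else 0 := by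
      rw [W_eq hpos]
      refine Finset.sum_congr rfl fun s hs => ?_
      by_cases hds : r ∣ s
      · rw [if_neg (by tauto), Cnt_eq_zero_of_dvd hds hpos]
      · rw [if_pos hds, Cnt_val hds]
        have h1 : r ^ k * i * s = r ^ k * s * i := by ring
        simp only [hfi]
        rw [h1]
    split_ifs with h
    · exact hsum
    · symm
      refine Finset.sum_eq_zero fun s hs => ?_
      rw [Finset.mem_Icc] at hs
      by_cases hds : r ∣ s
      case pos => rw [if_neg (by tauto)]
      case neg =>
        rw [if_pos hds]
        simp only [hfi]
        have h2 : r ^ k * i ≤ r ^ k * s * i :=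
          Nat.mul_le_mul_right i (Nat.le_mul_of_pos_right _ (by omega : 0 < s))
        rw [if_neg (by omega)]
  rw [Finset.sum_congr rfl fun k _ => hW k]
  have hT : (∑ k ∈ Finset.range (n+1), ∑ s ∈ Finset.Icc 1 n,
      if ¬ r ∣ s then fi (r ^ k * s) else 0)
      = ∑ p ∈ TT r n, fi (r ^ p.1 * p.2) := by
    rw [TT, Finset.sum_filter, Finset.sum_product]
    refine Finset.sum_congr rfl fun k _ => ?_
    rw [← rangeFilterOne, Finset.sum_filter]
    refine Finset.sum_congr rfl fun s _ => ?_
    by_cases hs1 : 1 ≤ s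
    · rw [if_pos hs1]
      by_cases hds : r ∣ s
      · rw [if_neg (by tauto), if_neg (by tauto)]
      · by_cases hle : r ^ k * s ≤ n
        · rw [if_pos (by tauto), if_pos (by tauto)]
        · rw [if_pos (by tauto), if_neg (by tauto)]
          exact hfi_zero (r ^ k * s) (by omega)
    · rw [if_neg hs1, if_neg (by tauto)]
  rw [hT, reindex_sum hr fi, Esum_eq]
  refine Finset.sum_congr rfl fun t ht => ?_
  rw [Finset.mem_Icc] at ht
  rw [Cnt_val hi]

end Aux

set_option maxHeartbeats 1000000 in
/-- `Π_{ρ ∈ CP_{r,n}} z_ρ = r^{c_{r,n}} · (Π_{ρ ∈ CP_{r,n}} Π_i ρ_i)^2`. -/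
theorem prod_z_eq (r n : ℕ) (hr : 2 ≤ r) :
    (∏ ρ ∈ CP r n, zPart ρ) = r ^ cExp r n * (∏ ρ ∈ CP r n, ρ.parts.prod) ^ 2 := by
  classical
  set P := ∏ ρ ∈ CP r n, ρ.parts.prod with hPdef
  -- Step 1 : split z
  have hz : (∏ ρ ∈ CP r n, zPart ρ)
      = P * ∏ ρ ∈ CP r n, ∏ i ∈ ρ.parts.toFinset, (ρ.parts.count i)! := by
    rw [hPdef, ← Finset.prod_mul_distrib]
    refine Finset.prod_congr rfl fun ρ _ => ?_
    rw [zPart, Finset.prod_mul_distrib, ← Finset.prod_multiset_count]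
  -- factorial as a product over Icc 1 n
  have fact_eq : ∀ c : ℕ, c ≤ n → (c ! = ∏ j ∈ Finset.Icc 1 n, if j ≤ c then j else 1) := by
    intro c hc
    have h1 : (∏ j ∈ Finset.Icc 1 c, j) = c ! := by
      rw [← Finset.Ico_add_one_right_eq_Icc]
      exact Finset.prod_Ico_id_eq_factorial c
    calc c ! = ∏ j ∈ Finset.Icc 1 c, j := h1.symm
      _ = ∏ j ∈ Finset.Icc 1 c, (if j ≤ c then j else 1) :=
          Finset.prod_congr rfl (fun j hj => by
            rw [if_pos (Finset.mem_Icc.mp hj).2])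
      _ = ∏ j ∈ Finset.Icc 1 n, (if j ≤ c then j else 1) := by
          refine Finset.prod_subset (Finset.Icc_subset_Icc_right hc) ?_
          intro x hx hx'
          rw [Finset.mem_Icc] at hx
          simp only [Finset.mem_Icc, not_and, not_le] at hx'
          rw [if_neg (by omega)]
  -- Step 2 : the factorial product equals ∏ j^{W j}
  have hG : (∏ ρ ∈ CP r n, ∏ i ∈ ρ.parts.toFinset, (ρ.parts.count i)!)
      = ∏ j ∈ Finset.Icc 1 n, j ^ W r j n := by
    have hρ : ∀ ρ ∈ CP r n, (∏ i ∈ ρ.parts.toFinset, (ρ.parts.count i)!)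
        = ∏ j ∈ Finset.Icc 1 n, j ^ numGE ρ j := by
      intro ρ _
      calc (∏ i ∈ ρ.parts.toFinset, (ρ.parts.count i)!)
          = ∏ i ∈ ρ.parts.toFinset, ∏ j ∈ Finset.Icc 1 n,
              (if j ≤ ρ.parts.count i then j else 1) :=
            Finset.prod_congr rfl fun i _ => fact_eq _ (count_le ρ i)
        _ = ∏ j ∈ Finset.Icc 1 n, ∏ i ∈ ρ.parts.toFinset,
              (if j ≤ ρ.parts.count i then j else 1) := Finset.prod_comm
        _ = ∏ j ∈ Finset.Icc 1 n, ∏ i ∈ ρ.parts.toFinset,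
              j ^ (if j ≤ ρ.parts.count i then 1 else 0) := by
            refine Finset.prod_congr rfl fun j _ => Finset.prod_congr rfl fun i _ => ?_
            split_ifs
            · rw [pow_one]
            · rw [pow_zero]
        _ = ∏ j ∈ Finset.Icc 1 n, j ^ numGE ρ j := by
            refine Finset.prod_congr rfl fun j _ => ?_
            rw [Finset.prod_pow_eq_pow_sum, ← Finset.card_filter]
            rfl
    rw [Finset.prod_congr rfl hρ, Finset.prod_comm]
    refine Finset.prod_congr rfl fun j _ => ?_
    rw [Finset.prod_pow_eq_pow_sum]
    rfl
  -- Step 3 : P as a product over Icc 1 n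
  have hP3 : P = ∏ i ∈ Finset.Icc 1 n, i ^ Esum r n i := by
    have hρ : ∀ ρ ∈ CP r n, ρ.parts.prod = ∏ i ∈ Finset.Icc 1 n, i ^ ρ.parts.count i := by
      intro ρ _
      rw [Finset.prod_multiset_count]
      refine Finset.prod_subset ?_ ?_
      · intro i hi
        rw [Multiset.mem_toFinset] at hi
        exact Finset.mem_Icc.mpr ⟨ρ.parts_pos hi, part_le hi⟩
      · intro i _ hi
        rw [Multiset.mem_toFinset] at hi
        rw [Multiset.count_eq_zero_of_notMem hi, pow_zero]
    rw [hPdef, Finset.prod_congr rfl hρ, Finset.prod_comm]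
    exact Finset.prod_congr rfl fun i _ => Finset.prod_pow_eq_pow_sum _ _ _
  -- Step 5 : the r-free parts give back P
  have hP' : (∏ j ∈ Finset.Icc 1 n, (j / r ^ r.maxPowDiv j) ^ W r j n) = P := by
    rw [← reindex_prod hr (f := fun j => (j / r ^ r.maxPowDiv j) ^ W r j n)]
    have step1 : (∏ p ∈ TT r n,
        ((r ^ p.1 * p.2) / r ^ r.maxPowDiv (r ^ p.1 * p.2)) ^ W r (r ^ p.1 * p.2) n)
        = ∏ p ∈ TT r n, p.2 ^ W r (r ^ p.1 * p.2) n := by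
      refine Finset.prod_congr rfl fun p hp => ?_
      simp only [TT, Finset.mem_filter, Finset.mem_product, Finset.mem_range] at hp
      rw [K_eq hr hp.2.1 p.1, Nat.mul_div_cancel_left _ (Nat.pow_pos (by omega))]
    rw [step1, TT, Finset.prod_filter, Finset.prod_product_right]
    have step2 : ∀ i ∈ Finset.range (n+1),
        (∏ k ∈ Finset.range (n+1),
          if ¬ r ∣ i ∧ 1 ≤ i ∧ r ^ k * i ≤ n then i ^ W r (r ^ k * i) n else 1)
        = i ^ (∑ k ∈ Finset.range (n+1),
            if ¬ r ∣ i ∧ 1 ≤ i ∧ r ^ k * i ≤ n then W r (r ^ k * i) n else 0) := by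
      intro i _
      rw [← Finset.prod_pow_eq_pow_sum]
      refine Finset.prod_congr rfl fun k _ => ?_
      by_cases hc : ¬ r ∣ i ∧ 1 ≤ i ∧ r ^ k * i ≤ n
      · rw [if_pos hc, if_pos hc]
      · rw [if_neg hc, if_neg hc, pow_zero]
    rw [Finset.prod_congr rfl step2, hP3]
    have hsub : Finset.Icc 1 n ⊆ Finset.range (n+1) := by
      intro x hx
      rw [Finset.mem_Icc] at hx
      rw [Finset.mem_range]
      omega
    rw [← Finset.prod_subset hsub (fun x hx hx' => ?_)]
    · refine Finset.prod_congr rfl fun i hi => ?_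
      by_cases hcase : ¬ r ∣ i
      · have hi1 : 1 ≤ i := Nat.pos_of_ne_zero (by rintro rfl; exact hcase (dvd_zero r))
        congr 1
        rw [← core (n := n) hr hcase]
        refine Finset.sum_congr rfl fun k _ => ?_
        by_cases hle : r ^ k * i ≤ n
        · rw [if_pos (by tauto), if_pos hle]
        · rw [if_neg (by tauto), if_neg hle]
      · push_neg at hcase
        rw [Esum_eq_zero hcase,
          Finset.sum_eq_zero (fun k _ => by rw [if_neg (by tauto)] : ∀ k ∈ Finset.range (n+1),
            (if ¬ r ∣ i ∧ 1 ≤ i ∧ r ^ k * i ≤ n then W r (r ^ k * i) n else 0) = 0)]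
    · -- x ∈ range (n+1), x ∉ Icc 1 n, so x = 0
      rw [Finset.mem_range] at hx
      simp only [Finset.mem_Icc, not_and, not_le] at hx'
      have hx0 : x = 0 := by omega
      subst hx0
      rw [Finset.sum_eq_zero (fun k _ => by
        rw [if_neg (fun hcon => absurd hcon.2.1 (by omega))]), pow_zero]
  -- Step 6 : assemble G
  have hG2 : (∏ j ∈ Finset.Icc 1 n, j ^ W r j n) = r ^ cExp r n * P := by
    have hsplit : ∀ j ∈ Finset.Icc 1 n, j ^ W r j n
        = r ^ (r.maxPowDiv j * W r j n) * (j / r ^ r.maxPowDiv j) ^ W r j n := by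
      intro j hj
      rw [Finset.mem_Icc] at hj
      have h := (K_spec hr (show 0 < j by omega)).1
      have hexp : (r ^ r.maxPowDiv j * (j / r ^ r.maxPowDiv j)) ^ W r j n
          = r ^ (r.maxPowDiv j * W r j n) * (j / r ^ r.maxPowDiv j) ^ W r j n := by
        rw [mul_pow, pow_mul]
      rw [← hexp, h]
    rw [Finset.prod_congr rfl hsplit, Finset.prod_mul_distrib,
      Finset.prod_pow_eq_pow_sum, hP', cExp_eq' hr]
  rw [hz, hG, hG2]
  ring
end
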